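/- There exists a constant C > 0 such that for all pairwise distinct indices i, j, k ∈ {1,2,3} and all smooth compactly supported functions f, g, h : ℝ³ → ℝ, ∫_{ℝ³₊} |f·g·h| dx ≤ C · ‖f‖_{L²} · ‖g‖_{L²}^{1/2} ‖∂ᵢg‖_{L²}^{1/2} · ‖h‖_{L²}^{1/4} ‖∂ⱼh‖_{L²}^{1/4} ‖∂ₖh‖_{L²}^{1/4} ‖∂ⱼ∂ₖh‖_{L²}^{1/4}. -/

import Mathlib

open MeasureTheory Function
open scoped ENNReal

/-- Partial derivative in the `i`-th coordinate direction. -/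
noncomputable def pd (i : Fin 3) (f : (Fin 3 → ℝ) → ℝ) : (Fin 3 → ℝ) → ℝ :=
  fun x => fderiv ℝ f x (Pi.single i 1)

/-- L² norm over the upper half-space `{x : x₃ > 0}` of ℝ³. -/
noncomputable def L2H (f : (Fin 3 → ℝ) → ℝ) : ℝ :=
  (eLpNorm f 2 (volume.restrict {x : Fin 3 → ℝ | 0 < x 2})).toReal

namespace Stmt1Aux

abbrev X : Type := Fin 3 → ℝ

/-- 1D Agmon-type inequality on an upward-closed set. -/
lemma agmon1d {v v' : ℝ → ℝ} (hv : ∀ t, HasDerivAt v (v' t) t) (hv' : Continuous v')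
    (hsupp : HasCompactSupport v)
    {S : Set ℝ} (hS : ∀ ⦃a b : ℝ⦄, a ∈ S → a ≤ b → b ∈ S) {t : ℝ} (ht : t ∈ S) :
    (‖v t‖₊ : ℝ≥0∞) ^ (2:ℝ) ≤ 2 * ∫⁻ s in S, (‖v s‖₊ : ℝ≥0∞) * ‖v' s‖₊ := by
  have hvc : Continuous v := continuous_iff_continuousAt.2 fun s => (hv s).continuousAt
  obtain ⟨R0, hR0⟩ : BddAbove (tsupport v) := hsupp.bddAbove
  set R : ℝ := max t R0 + 1 with hR
  have htR : t ≤ R := le_trans (le_max_left t R0) (by linarith [le_refl (max t R0)])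
  have hvR : v R = 0 := by
    apply image_eq_zero_of_notMem_tsupport
    intro hmem
    have := hR0 hmem
    have h2 := le_max_right t R0
    simp only [hR] at this
    linarith
  have key : ∫ s in t..R, 2 * v s * v' s = v R ^ 2 - v t ^ 2 := by
    apply intervalIntegral.integral_eq_sub_of_hasDerivAt (f := fun s => v s ^ 2)
    · intro s _
      exact (by simpa using (hv s).pow 2 : HasDerivAt (v ^ 2) (2 * v s * v' s) s)
    · exact ((continuous_const.mul hvc).mul hv').intervalIntegrable _ _
  have h3 : v t ^ 2 = -∫ s in Set.Ioc t R, 2 * v s * v' s := by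
    rw [← intervalIntegral.integral_of_le htR, key, hvR]; ring
  have step1 : (‖v t‖₊ : ℝ≥0∞) ^ (2:ℝ) = (‖v t ^ 2‖₊ : ℝ≥0∞) := by
    rw [show (2:ℝ) = ((2:ℕ):ℝ) by norm_num, ENNReal.rpow_natCast, ← ENNReal.coe_pow,
      nnnorm_pow]
  have step2 : (‖v t ^ 2‖₊ : ℝ≥0∞) ≤ ∫⁻ s in Set.Ioc t R, (‖2 * v s * v' s‖₊ : ℝ≥0∞) := by
    rw [h3, nnnorm_neg]
    exact enorm_integral_le_lintegral_enorm _
  have hsub : Set.Ioc t R ⊆ S := fun s hs => hS ht (le_of_lt hs.1)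
  have step3 : (∫⁻ s in Set.Ioc t R, (‖2 * v s * v' s‖₊ : ℝ≥0∞)) ≤
      ∫⁻ s in S, (‖2 * v s * v' s‖₊ : ℝ≥0∞) :=
    lintegral_mono' (Measure.restrict_mono hsub le_rfl) le_rfl
  have step4 : (∫⁻ s in S, (‖2 * v s * v' s‖₊ : ℝ≥0∞)) =
      2 * ∫⁻ s in S, (‖v s‖₊ : ℝ≥0∞) * ‖v' s‖₊ := by
    rw [← lintegral_const_mul' _ _ (by norm_num : (2:ℝ≥0∞) ≠ ⊤)]
    congr 1
    ext s
    push_cast [nnnorm_mul]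
    rw [show ‖(2:ℝ)‖₊ = 2 by simp]
    push_cast
    ring
  calc (‖v t‖₊ : ℝ≥0∞) ^ (2:ℝ) = (‖v t ^ 2‖₊ : ℝ≥0∞) := step1
    _ ≤ ∫⁻ s in Set.Ioc t R, (‖2 * v s * v' s‖₊ : ℝ≥0∞) := step2
    _ ≤ ∫⁻ s in S, (‖2 * v s * v' s‖₊ : ℝ≥0∞) := step3
    _ = 2 * ∫⁻ s in S, (‖v s‖₊ : ℝ≥0∞) * ‖v' s‖₊ := step4



noncomputable def chi : X → ℝ≥0∞ := fun x => if 0 < x 2 then 1 else 0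

lemma measurableSet_H : MeasurableSet {x : X | 0 < x 2} :=
  measurableSet_lt measurable_const (measurable_pi_apply 2)

lemma chi_meas : Measurable chi := by
  unfold chi
  exact Measurable.ite measurableSet_H measurable_const measurable_const

lemma chi_sq (x : X) : chi x * chi x = chi x := by
  unfold chi; by_cases h : 0 < x 2 <;> simp [h]

noncomputable def wt (u : X → ℝ) : X → ℝ≥0∞ := fun x => chi x * (‖u x‖₊ : ℝ≥0∞)

lemma wt_meas {u : X → ℝ} (hu : Continuous u) : Measurable (wt u) :=
  chi_meas.mul (hu.measurable.nnnorm.coe_nnreal_ennreal)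

/-- Integration in a single coordinate. -/
noncomputable def M (d : Fin 3) (w : X → ℝ≥0∞) : X → ℝ≥0∞ :=
  fun x => ∫⁻ t, w (update x d t)

lemma M_eq_lmarginal (d : Fin 3) (w : X → ℝ≥0∞) :
    M d w = ∫⋯∫⁻_{d}, w := by
  rw [lmarginal_singleton]; rfl

lemma M_meas {w : X → ℝ≥0∞} (hw : Measurable w) (d : Fin 3) : Measurable (M d w) := by
  rw [M_eq_lmarginal]; exact hw.lmarginal _

lemma M_mono {w w' : X → ℝ≥0∞} (h : ∀ y, w y ≤ w' y) (d : Fin 3) (x : X) :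
    M d w x ≤ M d w' x :=
  lintegral_mono fun t => h _

/-- `M d w` does not depend on coordinate `d`. -/
lemma M_update (d : Fin 3) (w : X → ℝ≥0∞) (x : X) (t : ℝ) :
    M d w (update x d t) = M d w x := by
  unfold M
  congr 1
  ext s
  rw [update_idem]

lemma M_const_mul (w : X → ℝ≥0∞) (d : Fin 3) {c : ℝ≥0∞} (hc : c ≠ ⊤) (x : X) :
    M d (fun y => c * w y) x = c * M d w x :=
  lintegral_const_mul' c _ hc


lemma M_indep_of_indep {w : X → ℝ≥0∞} {e : Fin 3} (hw : ∀ x t, w (update x e t) = w x)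
    {d : Fin 3} (hde : d ≠ e) (x : X) (t : ℝ) :
    M d w (update x e t) = M d w x := by
  unfold M
  congr 1
  ext s
  rw [update_comm hde.symm, hw]

/-- Cauchy–Schwarz for `M`. -/
lemma M_CS {u v : X → ℝ≥0∞} (hu : Measurable u) (hv : Measurable v) (d : Fin 3) (x : X) :
    M d (fun y => u y * v y) x ≤
      (M d (fun y => u y ^ (2:ℝ)) x) ^ (1/2:ℝ) * (M d (fun y => v y ^ (2:ℝ)) x) ^ (1/2:ℝ) := by
  have h2 : Real.HolderConjugate 2 2 := Real.HolderConjugate.two_two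
  exact ENNReal.lintegral_mul_le_Lp_mul_Lq _ h2
    ((hu.comp (measurable_update x)).aemeasurable)
    ((hv.comp (measurable_update x)).aemeasurable)

/-- Cauchy–Schwarz for the full integral. -/
lemma lintegral_CS {u v : X → ℝ≥0∞} (hu : Measurable u) (hv : Measurable v) :
    ∫⁻ y, u y * v y ≤
      (∫⁻ y, u y ^ (2:ℝ)) ^ (1/2:ℝ) * (∫⁻ y, v y ^ (2:ℝ)) ^ (1/2:ℝ) := by
  have h2 : Real.HolderConjugate 2 2 := Real.HolderConjugate.two_two
  exact ENNReal.lintegral_mul_le_Lp_mul_Lq _ h2 hu.aemeasurable hv.aemeasurable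

/-- Decomposition of the full integral into iterated one-dimensional integrals. -/
lemma lintegral_M {i j k : Fin 3} (hij : i ≠ j) (hik : i ≠ k) (hjk : j ≠ k)
    {w : X → ℝ≥0∞} (hw : Measurable w) (x : X) :
    ∫⁻ y, w y = M i (M j (M k w)) x := by
  have huniv : (insert k (insert j ({i} : Finset (Fin 3)))) = Finset.univ := by
    apply Finset.eq_univ_of_card
    rw [Finset.card_insert_of_notMem (by simp [hjk.symm, hik.symm]),
      Finset.card_insert_of_notMem (by simp [hij.symm]), Finset.card_singleton]
    rfl
  have h1 : (∫⋯∫⁻_insert k (insert j {i}), w) =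
      ∫⋯∫⁻_insert j {i}, (M k w) := by
    rw [lmarginal_insert' _ hw (by simp [hjk.symm, hik.symm])]
    rfl
  have h2 : (∫⋯∫⁻_insert j {i}, (M k w)) = ∫⋯∫⁻_{i}, (M j (M k w)) := by
    rw [lmarginal_insert' _ (M_meas hw k) (by simp [hij.symm])]
    rfl
  calc ∫⁻ y, w y = ∫⁻ y, w y ∂(Measure.pi fun _ => volume) := by rw [← volume_pi]
    _ = (∫⋯∫⁻_Finset.univ, w) x := lintegral_eq_lmarginal_univ x
    _ = (∫⋯∫⁻_insert k (insert j {i}), w) x := by rw [huniv]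
    _ = M i (M j (M k w)) x := by rw [h1, h2, ← M_eq_lmarginal]


lemma fderiv_contDiff {u : X → ℝ} (hu : ContDiff ℝ (⊤ : ℕ∞) u) :
    ContDiff ℝ (⊤ : ℕ∞) (fderiv ℝ u) :=
  hu.fderiv_right (by exact_mod_cast le_top)

lemma pd_contDiff {u : X → ℝ} (hu : ContDiff ℝ (⊤ : ℕ∞) u) (d : Fin 3) :
    ContDiff ℝ (⊤ : ℕ∞) (pd d u) :=
  (fderiv_contDiff hu).clm_apply contDiff_const

lemma pd_cont {u : X → ℝ} (hu : ContDiff ℝ (⊤ : ℕ∞) u) (d : Fin 3) :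
    Continuous (pd d u) :=
  (pd_contDiff hu d).continuous

lemma pd_compactSupport {u : X → ℝ} (hu : ContDiff ℝ (⊤ : ℕ∞) u)
    (hsupp : HasCompactSupport u) (d : Fin 3) : HasCompactSupport (pd d u) := by
  have : pd d u = (fun L : (X →L[ℝ] ℝ) => L (Pi.single d 1)) ∘ (fderiv ℝ u) := rfl
  rw [this]
  exact (hsupp.fderiv ℝ).comp_left (by simp)

/-- Symmetry of second partial derivatives. -/
lemma pd_comm {u : X → ℝ} (hu : ContDiff ℝ (⊤ : ℕ∞) u) (a b : Fin 3) :
    pd a (pd b u) = pd b (pd a u) := by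
  have hdiff : ∀ y, HasFDerivAt u (fderiv ℝ u y) y := fun y =>
    (hu.differentiable (by simp) y).hasFDerivAt
  funext x
  have hD : HasFDerivAt (fderiv ℝ u) (fderiv ℝ (fderiv ℝ u) x) x :=
    (((fderiv_contDiff hu).differentiable (by simp)) x).hasFDerivAt
  have hsymm := second_derivative_symmetric hdiff hD
  have key : ∀ c : Fin 3, ∀ w : X,
      fderiv ℝ (fun y => fderiv ℝ u y (Pi.single c 1)) x w =
        fderiv ℝ (fderiv ℝ u) x w (Pi.single c 1) := by
    intro c w
    have h1 : HasFDerivAt (fun y => fderiv ℝ u y (Pi.single c 1))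
        ((ContinuousLinearMap.apply ℝ ℝ ((Pi.single c 1 : X))).comp (fderiv ℝ (fderiv ℝ u) x)) x := by
      exact (ContinuousLinearMap.apply ℝ ℝ ((Pi.single c 1 : X))).hasFDerivAt.comp x hD
    rw [h1.fderiv]
    rfl
  show fderiv ℝ (fun y => fderiv ℝ u y (Pi.single b 1)) x (Pi.single a 1) =
    fderiv ℝ (fun y => fderiv ℝ u y (Pi.single a 1)) x (Pi.single b 1)
  rw [key b (Pi.single a 1), key a (Pi.single b 1), hsymm]

/-- The line curve through `x` in direction `d` and its derivative. -/
lemma curve_hasDerivAt {u : X → ℝ} (hu : ContDiff ℝ (⊤ : ℕ∞) u) (d : Fin 3) (x : X) (t : ℝ) :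
    HasDerivAt (fun s => u (update x d s)) (pd d u (update x d t)) t := by
  have hrepr : ∀ s : ℝ, update x d s = x + (s - x d) • (Pi.single d 1 : X) := by
    intro s
    funext m
    by_cases hm : m = d
    · subst hm; simp
    · simp [update_of_ne hm, Pi.single_apply, hm]
  have hline : HasDerivAt (fun s : ℝ => x + (s - x d) • (Pi.single d 1 : X))
      (Pi.single d 1 : X) t := by
    simpa using (((hasDerivAt_id t).sub_const (x d)).smul_const ((Pi.single d 1 : X))).const_add x
  have hu' := ((hu.differentiable (by simp))
    (x + (t - x d) • (Pi.single d 1 : X))).hasFDerivAt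
  have hcomp := hu'.comp_hasDerivAt t hline
  simp only [hrepr]
  exact hcomp


lemma curve_compactSupport {u : X → ℝ} (hsupp : HasCompactSupport u) (d : Fin 3) (x : X) :
    HasCompactSupport (fun s => u (update x d s)) := by
  apply HasCompactSupport.intro (K := (fun y : X => y d) '' tsupport u)
    (hsupp.image (continuous_apply d))
  intro s hs
  by_contra hne
  apply hs
  refine ⟨update x d s, subset_tsupport u ?_, update_self d s x⟩
  simpa [Function.mem_support] using hne

lemma agmonX (d : Fin 3) {u : X → ℝ} (hu : ContDiff ℝ (⊤ : ℕ∞) u)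
    (hsupp : HasCompactSupport u) (x : X) :
    wt u x ^ (2:ℝ) ≤ 2 * M d (fun y => wt u y * wt (pd d u) y) x := by
  have hint : ∀ y, wt u y * wt (pd d u) y = chi y * ((‖u y‖₊ : ℝ≥0∞) * ‖pd d u y‖₊) := by
    intro y
    unfold wt
    rw [mul_mul_mul_comm, chi_sq]
  set v : ℝ → ℝ := fun s => u (update x d s) with hvdef
  set v' : ℝ → ℝ := fun s => pd d u (update x d s) with hv'def
  have hv : ∀ s, HasDerivAt v (v' s) s := fun s => curve_hasDerivAt hu d x s
  have hcurve : Continuous (fun s : ℝ => update x d s) := by fun_prop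
  have hv' : Continuous v' := (pd_cont hu d).comp hcurve
  have hvs : HasCompactSupport v := curve_compactSupport hsupp d x
  by_cases hx : 0 < x 2
  · have hchix : chi x = 1 := by unfold chi; simp [hx]
    have hLHS : wt u x = (‖v (x d)‖₊ : ℝ≥0∞) := by
      unfold wt
      rw [hchix, one_mul, hvdef]
      simp [update_eq_self]
    by_cases hd : d = 2
    · subst hd
      have hRHS : M 2 (fun y => wt u y * wt (pd 2 u) y) x =
          ∫⁻ s in Set.Ioi (0:ℝ), (‖v s‖₊ : ℝ≥0∞) * ‖v' s‖₊ := by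
        unfold M
        rw [← lintegral_indicator measurableSet_Ioi]
        congr 1
        funext s
        simp only [hint]
        have h2 : chi (update x 2 s) = if 0 < s then 1 else 0 := by
          unfold chi; rw [update_self]
        rw [h2, Set.indicator_apply]
        by_cases hs : 0 < s <;> simp [hs, Set.mem_Ioi, hvdef, hv'def]
      rw [hRHS, hLHS]
      exact agmon1d hv hv' hvs (fun a b ha hab => lt_of_lt_of_le ha hab) hx
    · have h2d : (2 : Fin 3) ≠ d := fun hh => hd hh.symm
      have hRHS : M d (fun y => wt u y * wt (pd d u) y) x =
          ∫⁻ s in (Set.univ : Set ℝ), (‖v s‖₊ : ℝ≥0∞) * ‖v' s‖₊ := by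
        unfold M
        rw [Measure.restrict_univ]
        congr 1
        funext s
        simp only [hint]
        have h2 : chi (update x d s) = chi x := by
          unfold chi; rw [update_of_ne h2d]
        rw [h2, hchix, one_mul]
      rw [hRHS, hLHS]
      exact agmon1d hv hv' hvs (fun a b _ _ => Set.mem_univ b) (Set.mem_univ (x d))
  · have hchix : chi x = 0 := by unfold chi; simp [hx]
    have : wt u x = 0 := by unfold wt; rw [hchix, zero_mul]
    rw [this, ENNReal.zero_rpow_of_pos (by norm_num)]
    exact zero_le


lemma M_const_mul2 {w : X → ℝ≥0∞} (hw : Measurable w) (d : Fin 3) (c : ℝ≥0∞) (x : X) :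
    M d (fun y => c * w y) x = c * M d w x :=
  lintegral_const_mul c (hw.comp (measurable_update x))

lemma le_sqrt' {x c : ℝ≥0∞} (h : x ^ (2:ℝ) ≤ c) : x ≤ c ^ (1/2:ℝ) := by
  calc x = (x ^ (2:ℝ)) ^ (1/2:ℝ) := by
        rw [← ENNReal.rpow_mul]; norm_num
    _ ≤ c ^ (1/2:ℝ) := ENNReal.rpow_le_rpow h (by norm_num)

lemma sqrt_sq' (x : ℝ≥0∞) : (x ^ (1/2:ℝ)) ^ (2:ℝ) = x := by
  rw [← ENNReal.rpow_mul]; norm_num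

lemma two_halves : (2:ℝ≥0∞) ^ (1/2:ℝ) * (2:ℝ≥0∞) ^ (1/2:ℝ) = 2 := by
  rw [← ENNReal.rpow_add _ _ (by norm_num) (by norm_num)]
  norm_num

/-- The central trilinear estimate, in `ℝ≥0∞`. -/
lemma main_ennreal {i j k : Fin 3} (hij : i ≠ j) (hik : i ≠ k) (hjk : j ≠ k)
    {f g h : X → ℝ}
    (hf : ContDiff ℝ (⊤ : ℕ∞) f) (hfs : HasCompactSupport f)
    (hg : ContDiff ℝ (⊤ : ℕ∞) g) (hgs : HasCompactSupport g)
    (hh : ContDiff ℝ (⊤ : ℕ∞) h) (hhs : HasCompactSupport h) :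
    ∫⁻ y, wt f y * wt g y * wt h y ≤
      3 * (∫⁻ y, wt f y ^ (2:ℝ)) ^ (1/2:ℝ) *
        ((∫⁻ y, wt g y ^ (2:ℝ)) ^ (1/4:ℝ) * (∫⁻ y, wt (pd i g) y ^ (2:ℝ)) ^ (1/4:ℝ)) *
        ((∫⁻ y, wt h y ^ (2:ℝ)) ^ (1/8:ℝ) * (∫⁻ y, wt (pd j h) y ^ (2:ℝ)) ^ (1/8:ℝ) *
         (∫⁻ y, wt (pd k h) y ^ (2:ℝ)) ^ (1/8:ℝ) *
         (∫⁻ y, wt (pd j (pd k h)) y ^ (2:ℝ)) ^ (1/8:ℝ)) := by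
  -- measurability
  have mF : Measurable (wt f) := wt_meas hf.continuous
  have mG : Measurable (wt g) := wt_meas hg.continuous
  have mGi : Measurable (wt (pd i g)) := wt_meas (pd_cont hg i)
  have mHh : Measurable (wt h) := wt_meas hh.continuous
  have mHj : Measurable (wt (pd j h)) := wt_meas (pd_cont hh j)
  have mHk : Measurable (wt (pd k h)) := wt_meas (pd_cont hh k)
  have mHjk : Measurable (wt (pd j (pd k h))) := wt_meas (pd_cont (pd_contDiff hh k) j)
  -- main auxiliary functions
  set W : X → ℝ≥0∞ := M i (fun y => wt g y * wt (pd i g) y) with hW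
  set Phi : X → ℝ≥0∞ := M j (M k (fun y => wt h y * wt (pd k h) y)) with hPhi
  set Psi : X → ℝ≥0∞ := M j (M k (fun y => wt (pd j h) y * wt (pd j (pd k h)) y)) with hPsi
  have mW : Measurable W := M_meas (mG.mul mGi) i
  have mPhi : Measurable Phi := M_meas (M_meas (mHh.mul mHk) k) j
  have mPsi : Measurable Psi := M_meas (M_meas (mHj.mul mHjk) k) j
  -- Cauchy--Schwarz in all variables
  have step1 : ∫⁻ y, wt f y * wt g y * wt h y ≤
      (∫⁻ y, wt f y ^ (2:ℝ)) ^ (1/2:ℝ) *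
        (∫⁻ y, (wt g y * wt h y) ^ (2:ℝ)) ^ (1/2:ℝ) := by
    have := lintegral_CS mF (mG.mul mHh)
    simp only [mul_assoc] at this ⊢
    exact this
  -- pointwise bound on wt h * wt (pd j h) using Agmon in direction k
  have hpt : ∀ y, wt h y * wt (pd j h) y ≤
      2 * ((M k (fun z => wt h z * wt (pd k h) z) y) ^ (1/2:ℝ) *
        (M k (fun z => wt (pd j h) z * wt (pd j (pd k h)) z) y) ^ (1/2:ℝ)) := by
    intro y
    have h1 : wt h y ≤ (2 * M k (fun z => wt h z * wt (pd k h) z) y) ^ (1/2:ℝ) :=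
      le_sqrt' (agmonX k hh hhs y)
    have h2' := agmonX k (pd_contDiff hh j) (pd_compactSupport hh hhs j) y
    rw [pd_comm hh k j] at h2'
    have h2 : wt (pd j h) y ≤
        (2 * M k (fun z => wt (pd j h) z * wt (pd j (pd k h)) z) y) ^ (1/2:ℝ) := le_sqrt' h2'
    calc wt h y * wt (pd j h) y ≤ _ * _ := mul_le_mul' h1 h2
      _ = 2 * ((M k (fun z => wt h z * wt (pd k h) z) y) ^ (1/2:ℝ) *
          (M k (fun z => wt (pd j h) z * wt (pd j (pd k h)) z) y) ^ (1/2:ℝ)) := by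
        rw [ENNReal.mul_rpow_of_nonneg _ _ (by norm_num : (0:ℝ) ≤ 1/2),
          ENNReal.mul_rpow_of_nonneg _ _ (by norm_num : (0:ℝ) ≤ 1/2),
          mul_mul_mul_comm, two_halves]
  -- the key pointwise bound on (wt h)²
  have hHh4 : ∀ a, wt h a ^ (2:ℝ) ≤ 4 * (Phi a ^ (1/2:ℝ) * Psi a ^ (1/2:ℝ)) := by
    intro a
    have mk1 : Measurable (fun y => (M k (fun z => wt h z * wt (pd k h) z) y) ^ (1/2:ℝ)) :=
      ENNReal.continuous_rpow_const.measurable.comp (M_meas (mHh.mul mHk) k)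
    have mk2 : Measurable
        (fun y => (M k (fun z => wt (pd j h) z * wt (pd j (pd k h)) z) y) ^ (1/2:ℝ)) :=
      ENNReal.continuous_rpow_const.measurable.comp (M_meas (mHj.mul mHjk) k)
    calc wt h a ^ (2:ℝ) ≤ 2 * M j (fun y => wt h y * wt (pd j h) y) a := agmonX j hh hhs a
      _ ≤ 2 * M j (fun y => 2 * ((M k (fun z => wt h z * wt (pd k h) z) y) ^ (1/2:ℝ) *
          (M k (fun z => wt (pd j h) z * wt (pd j (pd k h)) z) y) ^ (1/2:ℝ))) a :=
        mul_le_mul_right (M_mono hpt j a) 2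
      _ = 4 * M j (fun y => (M k (fun z => wt h z * wt (pd k h) z) y) ^ (1/2:ℝ) *
          (M k (fun z => wt (pd j h) z * wt (pd j (pd k h)) z) y) ^ (1/2:ℝ)) a := by
        rw [M_const_mul2 (w := fun y => (M k (fun z => wt h z * wt (pd k h) z) y) ^ (1/2:ℝ) *
            (M k (fun z => wt (pd j h) z * wt (pd j (pd k h)) z) y) ^ (1/2:ℝ)) (mk1.mul mk2) j 2 a, ← mul_assoc]
        norm_num
      _ ≤ 4 * ((M j (fun y => ((M k (fun z => wt h z * wt (pd k h) z) y) ^ (1/2:ℝ)) ^ (2:ℝ)) a)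
            ^ (1/2:ℝ) *
          (M j (fun y => ((M k (fun z => wt (pd j h) z * wt (pd j (pd k h)) z) y) ^ (1/2:ℝ))
            ^ (2:ℝ)) a) ^ (1/2:ℝ)) :=
        mul_le_mul_right (M_CS mk1 mk2 j a) 4
      _ = 4 * (Phi a ^ (1/2:ℝ) * Psi a ^ (1/2:ℝ)) := by
        simp only [sqrt_sq', hPhi, hPsi]
  -- the pointwise bound on (wt g)²
  have hG2 : ∀ a, wt g a ^ (2:ℝ) ≤ 2 * W a := fun a => agmonX i hg hgs a
  -- combine
  have hpoint : ∀ a, (wt g a * wt h a) ^ (2:ℝ) ≤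
      8 * (W a * (Phi a ^ (1/2:ℝ) * Psi a ^ (1/2:ℝ))) := by
    intro a
    calc (wt g a * wt h a) ^ (2:ℝ) = wt g a ^ (2:ℝ) * wt h a ^ (2:ℝ) :=
        ENNReal.mul_rpow_of_nonneg _ _ (by norm_num)
      _ ≤ (2 * W a) * (4 * (Phi a ^ (1/2:ℝ) * Psi a ^ (1/2:ℝ))) :=
        mul_le_mul' (hG2 a) (hHh4 a)
      _ = 8 * (W a * (Phi a ^ (1/2:ℝ) * Psi a ^ (1/2:ℝ))) := by ring
  -- auxiliary functions for the iterated-integral step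
  set Th : X → ℝ≥0∞ := fun a => Phi a ^ (1/2:ℝ) * Psi a ^ (1/2:ℝ) with hTh
  set v : X → ℝ≥0∞ := fun a => W a * Th a with hv
  have mTh : Measurable Th :=
    (ENNReal.continuous_rpow_const.measurable.comp mPhi).mul
      (ENNReal.continuous_rpow_const.measurable.comp mPsi)
  have mv : Measurable v := mW.mul mTh
  set x0 : X := fun _ => 0 with hx0
  set cA : ℝ≥0∞ := ∫⁻ y, wt h y * wt (pd k h) y with hcA
  set cB : ℝ≥0∞ := ∫⁻ y, wt (pd j h) y * wt (pd j (pd k h)) y with hcB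
  set cg : ℝ≥0∞ := ∫⁻ y, wt g y * wt (pd i g) y with hcg
  -- the integral of `v` over single coordinate i
  have step6 : ∀ y, M i v y ≤ (cA ^ (1/2:ℝ) * cB ^ (1/2:ℝ)) * W y := by
    intro y
    have hveq : (fun t => v (update y i t)) = fun t => W y * Th (update y i t) := by
      funext t
      show W (update y i t) * Th (update y i t) = _
      rw [hW, M_update]
    have hsplit : M i v y = W y * M i Th y := by
      show (∫⁻ t, v (update y i t)) = _
      rw [hveq]
      exact lintegral_const_mul _ (mTh.comp (measurable_update y))
    have hPhiInt : M i Phi y = cA := by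
      rw [hPhi, hcA]
      exact (lintegral_M hij hik hjk (mHh.mul mHk) y).symm
    have hPsiInt : M i Psi y = cB := by
      rw [hPsi, hcB]
      exact (lintegral_M hij hik hjk (mHj.mul mHjk) y).symm
    have hCS : M i Th y ≤ cA ^ (1/2:ℝ) * cB ^ (1/2:ℝ) := by
      have := M_CS (u := fun z => Phi z ^ (1/2:ℝ)) (v := fun z => Psi z ^ (1/2:ℝ))
        (ENNReal.continuous_rpow_const.measurable.comp mPhi)
        (ENNReal.continuous_rpow_const.measurable.comp mPsi) i y
      simp only [sqrt_sq'] at this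
      rw [hPhiInt, hPsiInt] at this
      exact this
    rw [hsplit, mul_comm (W y)]
    exact mul_le_mul_left hCS (W y)
  have step7 : ∀ y, M j (M i v) y ≤ (cA ^ (1/2:ℝ) * cB ^ (1/2:ℝ)) * M j W y := by
    intro y
    calc M j (M i v) y ≤ M j (fun z => (cA ^ (1/2:ℝ) * cB ^ (1/2:ℝ)) * W z) y :=
        M_mono step6 j y
      _ = (cA ^ (1/2:ℝ) * cB ^ (1/2:ℝ)) * M j W y := M_const_mul2 mW j _ y
  have step8 : M k (M j (M i v)) x0 ≤ (cA ^ (1/2:ℝ) * cB ^ (1/2:ℝ)) * cg := by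
    calc M k (M j (M i v)) x0
        ≤ M k (fun y => (cA ^ (1/2:ℝ) * cB ^ (1/2:ℝ)) * M j W y) x0 := M_mono step7 k x0
      _ = (cA ^ (1/2:ℝ) * cB ^ (1/2:ℝ)) * M k (M j W) x0 :=
        M_const_mul2 (M_meas mW j) k _ x0
      _ = (cA ^ (1/2:ℝ) * cB ^ (1/2:ℝ)) * cg := by
        rw [hW, hcg]
        congr 1
        exact (lintegral_M hjk.symm hik.symm hij.symm (mG.mul mGi) x0).symm
  have hJ : (∫⁻ y, (wt g y * wt h y) ^ (2:ℝ)) ≤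
      8 * ((cA ^ (1/2:ℝ) * cB ^ (1/2:ℝ)) * cg) := by
    calc (∫⁻ y, (wt g y * wt h y) ^ (2:ℝ))
        ≤ ∫⁻ y, 8 * (W y * (Phi y ^ (1/2:ℝ) * Psi y ^ (1/2:ℝ))) := lintegral_mono hpoint
      _ = 8 * ∫⁻ y, v y := by
        rw [← lintegral_const_mul 8 mv]
      _ = 8 * M k (M j (M i v)) x0 := by
        rw [← lintegral_M hjk.symm hik.symm hij.symm mv x0]
      _ ≤ 8 * ((cA ^ (1/2:ℝ) * cB ^ (1/2:ℝ)) * cg) := mul_le_mul_right step8 8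
  -- Cauchy-Schwarz on the three full-space integrals
  have hcA' : cA ≤ (∫⁻ y, wt h y ^ (2:ℝ)) ^ (1/2:ℝ) *
      (∫⁻ y, wt (pd k h) y ^ (2:ℝ)) ^ (1/2:ℝ) := lintegral_CS mHh mHk
  have hcB' : cB ≤ (∫⁻ y, wt (pd j h) y ^ (2:ℝ)) ^ (1/2:ℝ) *
      (∫⁻ y, wt (pd j (pd k h)) y ^ (2:ℝ)) ^ (1/2:ℝ) := lintegral_CS mHj mHjk
  have hcg' : cg ≤ (∫⁻ y, wt g y ^ (2:ℝ)) ^ (1/2:ℝ) *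
      (∫⁻ y, wt (pd i g) y ^ (2:ℝ)) ^ (1/2:ℝ) := lintegral_CS mG mGi
  -- put everything together
  have hJ2 : (∫⁻ y, (wt g y * wt h y) ^ (2:ℝ)) ≤
      8 * (((∫⁻ y, wt h y ^ (2:ℝ)) ^ (1/2:ℝ) * (∫⁻ y, wt (pd k h) y ^ (2:ℝ)) ^ (1/2:ℝ))
            ^ (1/2:ℝ) *
          ((∫⁻ y, wt (pd j h) y ^ (2:ℝ)) ^ (1/2:ℝ) *
            (∫⁻ y, wt (pd j (pd k h)) y ^ (2:ℝ)) ^ (1/2:ℝ)) ^ (1/2:ℝ)) *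
        ((∫⁻ y, wt g y ^ (2:ℝ)) ^ (1/2:ℝ) * (∫⁻ y, wt (pd i g) y ^ (2:ℝ)) ^ (1/2:ℝ)) := by
    refine le_trans hJ ?_
    rw [← mul_assoc]
    exact mul_le_mul'
      (mul_le_mul_right
        (mul_le_mul' (ENNReal.rpow_le_rpow hcA' (by norm_num))
          (ENNReal.rpow_le_rpow hcB' (by norm_num))) 8) hcg'
  have final : ∫⁻ y, wt f y * wt g y * wt h y ≤
      (∫⁻ y, wt f y ^ (2:ℝ)) ^ (1/2:ℝ) *
        (8 * (((∫⁻ y, wt h y ^ (2:ℝ)) ^ (1/2:ℝ) * (∫⁻ y, wt (pd k h) y ^ (2:ℝ)) ^ (1/2:ℝ))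
              ^ (1/2:ℝ) *
            ((∫⁻ y, wt (pd j h) y ^ (2:ℝ)) ^ (1/2:ℝ) *
              (∫⁻ y, wt (pd j (pd k h)) y ^ (2:ℝ)) ^ (1/2:ℝ)) ^ (1/2:ℝ)) *
          ((∫⁻ y, wt g y ^ (2:ℝ)) ^ (1/2:ℝ) * (∫⁻ y, wt (pd i g) y ^ (2:ℝ)) ^ (1/2:ℝ)))
          ^ (1/2:ℝ) :=
    le_trans step1 (mul_le_mul_right (ENNReal.rpow_le_rpow hJ2 (by norm_num)) _)
  refine le_trans final ?_
  have h83 : (8:ℝ≥0∞) ^ (1/2:ℝ) ≤ 3 := by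
    have h9 : (8:ℝ≥0∞) ≤ (3:ℝ≥0∞) ^ (2:ℝ) := by
      rw [show (2:ℝ) = ((2:ℕ):ℝ) by norm_num, ENNReal.rpow_natCast]
      norm_num
    calc (8:ℝ≥0∞) ^ (1/2:ℝ) ≤ ((3:ℝ≥0∞) ^ (2:ℝ)) ^ (1/2:ℝ) :=
        ENNReal.rpow_le_rpow h9 (by norm_num)
      _ = 3 := by rw [← ENNReal.rpow_mul]; norm_num
  have key : (8 * (((∫⁻ y, wt h y ^ (2:ℝ)) ^ (1/2:ℝ) * (∫⁻ y, wt (pd k h) y ^ (2:ℝ)) ^ (1/2:ℝ))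
              ^ (1/2:ℝ) *
            ((∫⁻ y, wt (pd j h) y ^ (2:ℝ)) ^ (1/2:ℝ) *
              (∫⁻ y, wt (pd j (pd k h)) y ^ (2:ℝ)) ^ (1/2:ℝ)) ^ (1/2:ℝ)) *
          ((∫⁻ y, wt g y ^ (2:ℝ)) ^ (1/2:ℝ) * (∫⁻ y, wt (pd i g) y ^ (2:ℝ)) ^ (1/2:ℝ)))
          ^ (1/2:ℝ)
      = (8:ℝ≥0∞) ^ (1/2:ℝ) *
          (((∫⁻ y, wt h y ^ (2:ℝ)) ^ (1/8:ℝ) * (∫⁻ y, wt (pd k h) y ^ (2:ℝ)) ^ (1/8:ℝ)) *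
           ((∫⁻ y, wt (pd j h) y ^ (2:ℝ)) ^ (1/8:ℝ) *
            (∫⁻ y, wt (pd j (pd k h)) y ^ (2:ℝ)) ^ (1/8:ℝ))) *
          ((∫⁻ y, wt g y ^ (2:ℝ)) ^ (1/4:ℝ) * (∫⁻ y, wt (pd i g) y ^ (2:ℝ)) ^ (1/4:ℝ)) := by
    simp only [ENNReal.mul_rpow_of_nonneg _ _ (by norm_num : (0:ℝ) ≤ 1/2),
      ← ENNReal.rpow_mul]
    norm_num
  rw [key]
  calc (∫⁻ y, wt f y ^ (2:ℝ)) ^ (1/2:ℝ) *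
        ((8:ℝ≥0∞) ^ (1/2:ℝ) *
          (((∫⁻ y, wt h y ^ (2:ℝ)) ^ (1/8:ℝ) * (∫⁻ y, wt (pd k h) y ^ (2:ℝ)) ^ (1/8:ℝ)) *
           ((∫⁻ y, wt (pd j h) y ^ (2:ℝ)) ^ (1/8:ℝ) *
            (∫⁻ y, wt (pd j (pd k h)) y ^ (2:ℝ)) ^ (1/8:ℝ))) *
          ((∫⁻ y, wt g y ^ (2:ℝ)) ^ (1/4:ℝ) * (∫⁻ y, wt (pd i g) y ^ (2:ℝ)) ^ (1/4:ℝ)))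
      ≤ (∫⁻ y, wt f y ^ (2:ℝ)) ^ (1/2:ℝ) *
        ((3:ℝ≥0∞) *
          (((∫⁻ y, wt h y ^ (2:ℝ)) ^ (1/8:ℝ) * (∫⁻ y, wt (pd k h) y ^ (2:ℝ)) ^ (1/8:ℝ)) *
           ((∫⁻ y, wt (pd j h) y ^ (2:ℝ)) ^ (1/8:ℝ) *
            (∫⁻ y, wt (pd j (pd k h)) y ^ (2:ℝ)) ^ (1/8:ℝ))) *
          ((∫⁻ y, wt g y ^ (2:ℝ)) ^ (1/4:ℝ) * (∫⁻ y, wt (pd i g) y ^ (2:ℝ)) ^ (1/4:ℝ))) :=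
      mul_le_mul_right (mul_le_mul_left (mul_le_mul_left h83 _) _) _
    _ = _ := by ring



lemma wt_rpow_indicator {u : X → ℝ} (y : X) :
    wt u y ^ (2:ℝ) = {x : X | 0 < x 2}.indicator (fun a => ((‖u a‖₊ : ℝ≥0∞)) ^ (2:ℝ)) y := by
  unfold wt chi
  by_cases hy : 0 < y 2
  · simp [Set.indicator, hy]
  · simp [Set.indicator, hy, ENNReal.zero_rpow_of_pos]

lemma L2H_eq (u : X → ℝ) :
    L2H u = ((∫⁻ y, wt u y ^ (2:ℝ)) ^ (1/2:ℝ)).toReal := by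
  unfold L2H
  rw [eLpNorm_eq_lintegral_rpow_enorm_toReal (by norm_num) (by norm_num)]
  congr 1
  have h2 : ((2:ℝ≥0∞)).toReal = (2:ℝ) := by norm_num
  rw [h2]
  congr 1
  rw [← lintegral_indicator measurableSet_H]
  congr 1
  funext y
  exact (wt_rpow_indicator y).symm

lemma Nsq_ne_top {u : X → ℝ} (hu : Continuous u) (hs : HasCompactSupport u) :
    (∫⁻ y, wt u y ^ (2:ℝ)) ≠ ⊤ := by
  have hm : MemLp u 2 (volume : Measure X) := hu.memLp_of_hasCompactSupport hs
  have h1 := hm.eLpNorm_lt_top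
  rw [eLpNorm_eq_lintegral_rpow_enorm_toReal (by norm_num) (by norm_num)] at h1
  have h2 : (∫⁻ y, ((‖u y‖₊ : ℝ≥0∞)) ^ (((2:ℝ≥0∞)).toReal)) ≠ ⊤ := by
    intro hc
    rw [show (∫⁻ (x : X), ‖u x‖ₑ ^ ENNReal.toReal 2) = ⊤ from hc] at h1
    simp [ENNReal.top_rpow_of_pos (by norm_num : (0:ℝ) < 1 / ((2:ℝ≥0∞)).toReal)] at h1
  refine ne_top_of_le_ne_top h2 (lintegral_mono fun y => ?_)
  have hle : wt u y ≤ (‖u y‖₊ : ℝ≥0∞) := by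
    unfold wt chi
    split <;> simp
  have h2' : ((2:ℝ≥0∞)).toReal = (2:ℝ) := by norm_num
  rw [h2']
  exact ENNReal.rpow_le_rpow hle (by norm_num)

lemma lhs_eq {f g h : X → ℝ} (hf : Continuous f) (hg : Continuous g) (hh : Continuous h) :
    (∫ x in {x : X | 0 < x 2}, |f x * g x * h x|) =
      (∫⁻ y, wt f y * wt g y * wt h y).toReal := by
  rw [integral_eq_lintegral_of_nonneg_ae (f := fun x => |f x * g x * h x|)
    (Filter.Eventually.of_forall fun x => abs_nonneg _)
    ((((hf.mul hg).mul hh).abs.aestronglyMeasurable :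
      AEStronglyMeasurable (fun x => |f x * g x * h x|) (volume.restrict {x : X | 0 < x 2})))]
  congr 1
  rw [← lintegral_indicator measurableSet_H]
  congr 1
  funext y
  unfold wt chi
  by_cases hy : 0 < y 2
  · simp only [Set.indicator, Set.mem_setOf_eq, hy, if_true, one_mul]
    rw [abs_mul, abs_mul, ENNReal.ofReal_mul (by positivity), ENNReal.ofReal_mul (abs_nonneg _)]
    rw [← Real.enorm_eq_ofReal_abs, ← Real.enorm_eq_ofReal_abs, ← Real.enorm_eq_ofReal_abs,
      enorm_eq_nnnorm, enorm_eq_nnnorm, enorm_eq_nnnorm]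
  · simp [Set.indicator, hy]


lemma toReal_pow_quarter (N : ℝ≥0∞) : ((N ^ (1/2:ℝ)).toReal) ^ (1/2:ℝ) = (N ^ (1/4:ℝ)).toReal := by
  rw [ENNReal.toReal_rpow, ← ENNReal.rpow_mul]
  norm_num

lemma toReal_pow_eighth (N : ℝ≥0∞) : ((N ^ (1/2:ℝ)).toReal) ^ (1/4:ℝ) = (N ^ (1/8:ℝ)).toReal := by
  rw [ENNReal.toReal_rpow, ← ENNReal.rpow_mul]
  norm_num

end Stmt1Aux

open Stmt1Aux in
/-- Anisotropic trilinear estimate over the upper half-space, for pairwise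
distinct coordinate directions `i, j, k`. -/
theorem stmt1 :
    ∃ C > (0 : ℝ), ∀ i j k : Fin 3, i ≠ j → i ≠ k → j ≠ k →
      ∀ f g h : (Fin 3 → ℝ) → ℝ,
      ContDiff ℝ (⊤ : ℕ∞) f → HasCompactSupport f →
      ContDiff ℝ (⊤ : ℕ∞) g → HasCompactSupport g →
      ContDiff ℝ (⊤ : ℕ∞) h → HasCompactSupport h →
      (∫ x in {x : Fin 3 → ℝ | 0 < x 2}, |f x * g x * h x|) ≤
        C * L2H f * (L2H g ^ (1/2 : ℝ) * L2H (pd i g) ^ (1/2 : ℝ)) *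
          (L2H h ^ (1/4 : ℝ) * L2H (pd j h) ^ (1/4 : ℝ) * L2H (pd k h) ^ (1/4 : ℝ) *
            L2H (pd j (pd k h)) ^ (1/4 : ℝ)) := by
  refine ⟨3, by norm_num, ?_⟩
  intro i j k hij hik hjk f g h hf hfs hg hgs hh hhs
  have main := main_ennreal hij hik hjk hf hfs hg hgs hh hhs
  have nf := Nsq_ne_top hf.continuous hfs
  have ng := Nsq_ne_top hg.continuous hgs
  have ngi := Nsq_ne_top (pd_cont hg i) (pd_compactSupport hg hgs i)
  have nh := Nsq_ne_top hh.continuous hhs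
  have nhj := Nsq_ne_top (pd_cont hh j) (pd_compactSupport hh hhs j)
  have nhk := Nsq_ne_top (pd_cont hh k) (pd_compactSupport hh hhs k)
  have nhjk := Nsq_ne_top (pd_cont (pd_contDiff hh k) j)
    (pd_compactSupport (pd_contDiff hh k) (pd_compactSupport hh hhs k) j)
  have hrne : ∀ (N : ℝ≥0∞), N ≠ ⊤ → ∀ r : ℝ, 0 ≤ r → N ^ r ≠ ⊤ := fun N hN r hr =>
    ENNReal.rpow_ne_top_of_nonneg hr hN
  have hne : (3:ℝ≥0∞) * (∫⁻ y, wt f y ^ (2:ℝ)) ^ (1/2:ℝ) *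
      ((∫⁻ y, wt g y ^ (2:ℝ)) ^ (1/4:ℝ) * (∫⁻ y, wt (pd i g) y ^ (2:ℝ)) ^ (1/4:ℝ)) *
      ((∫⁻ y, wt h y ^ (2:ℝ)) ^ (1/8:ℝ) * (∫⁻ y, wt (pd j h) y ^ (2:ℝ)) ^ (1/8:ℝ) *
       (∫⁻ y, wt (pd k h) y ^ (2:ℝ)) ^ (1/8:ℝ) *
       (∫⁻ y, wt (pd j (pd k h)) y ^ (2:ℝ)) ^ (1/8:ℝ)) ≠ ⊤ := by
    refine ENNReal.mul_ne_top (ENNReal.mul_ne_top (ENNReal.mul_ne_top (by norm_num)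
      (hrne _ nf _ (by norm_num)))
      (ENNReal.mul_ne_top (hrne _ ng _ (by norm_num)) (hrne _ ngi _ (by norm_num))))
      (ENNReal.mul_ne_top (ENNReal.mul_ne_top (ENNReal.mul_ne_top
        (hrne _ nh _ (by norm_num)) (hrne _ nhj _ (by norm_num)))
        (hrne _ nhk _ (by norm_num))) (hrne _ nhjk _ (by norm_num)))
  rw [lhs_eq hf.continuous hg.continuous hh.continuous]
  refine le_trans (ENNReal.toReal_mono hne main) (le_of_eq ?_)
  rw [L2H_eq f, L2H_eq g, L2H_eq (pd i g), L2H_eq h, L2H_eq (pd j h), L2H_eq (pd k h),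
    L2H_eq (pd j (pd k h)), toReal_pow_quarter, toReal_pow_quarter, toReal_pow_eighth,
    toReal_pow_eighth, toReal_pow_eighth, toReal_pow_eighth]
  simp only [ENNReal.toReal_mul]
  norm_num
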